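/- arXiv:1005.2839 — 3 statements merged into one kernel-verified Lean document; each statement's English description precedes it below -/
import Mathlib

section
/- Let U be a k-dimensional GF(q)-subspace of GF(q^v). Suppose that the quotients v_i/v_j of representatives v_i, v_j of distinct one-dimensional subspaces of U are pairwise distinct up to GF(q)-scalar. Then for every g ∈ GF(q^v)^× with g·U ≠ U, dim(U ∩ g·U) ≤ 1. -/
open Module

/-- If the quotients of representatives of distinct one-dimensional subspaces of a
`k`-dimensional subspace `U` of `GF(q^v)` are pairwise distinct up to `GF(q)`-scalar,
then `U` intersects every translate `g·U ≠ U` in dimension at most `1`. -/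
theorem distinct_quotients_imp_good_orbit
    (q v k : ℕ) (hv : 1 ≤ v) (hk : 2 ≤ k)
    (K F : Type*) [Field K] [Fintype K] [Field F] [Fintype F] [Algebra K F]
    (hq : Fintype.card K = q) (hdim : finrank K F = v)
    (U : Submodule K F) (hU : finrank K ↥U = k)
    (hquot : ∀ u₁ ∈ U, ∀ u₂ ∈ U, ∀ u₃ ∈ U, ∀ u₄ ∈ U,
      u₁ ≠ 0 → u₂ ≠ 0 → u₃ ≠ 0 → u₄ ≠ 0 →
      Submodule.span K {u₁} ≠ Submodule.span K {u₂} →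
      Submodule.span K {u₃} ≠ Submodule.span K {u₄} →
      Submodule.span K {u₁ / u₂} = Submodule.span K {u₃ / u₄} →
      Submodule.span K {u₁} = Submodule.span K {u₃} ∧
        Submodule.span K {u₂} = Submodule.span K {u₄}) :
    ∀ g : Fˣ, Submodule.map (LinearMap.mulLeft K (g : F)) U ≠ U →
      finrank K ↥(U ⊓ Submodule.map (LinearMap.mulLeft K (g : F)) U) ≤ 1 := by
  intro g hg
  by_contra hlt
  push_neg at hlt
  set W := U ⊓ Submodule.map (LinearMap.mulLeft K (g : F)) U with hW
  have hg0 : (g : F) ≠ 0 := Units.ne_zero g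
  obtain ⟨x, hx0⟩ : ∃ x : ↥W, x ≠ 0 := by
    rcases subsingleton_or_nontrivial ↥W with h | h
    · have : finrank K ↥W = 0 := by haveI := h; exact finrank_zero_of_subsingleton
      omega
    · exact exists_ne 0
  obtain ⟨y, hxy⟩ := exists_linearIndependent_pair_of_one_lt_finrank hlt hx0
  rw [linearIndependent_fin2] at hxy
  simp only [Matrix.cons_val_one, Matrix.head_cons, Matrix.cons_val_zero] at hxy
  obtain ⟨hy0, hnsc⟩ := hxy
  have hxF0 : (x : F) ≠ 0 := fun h => hx0 (Subtype.ext h)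
  have hyF0 : (y : F) ≠ 0 := fun h => hy0 (Subtype.ext h)
  have hxU : (x : F) ∈ U := x.2.1
  have hyU : (y : F) ∈ U := y.2.1
  obtain ⟨a, haU, hax⟩ := x.2.2
  obtain ⟨b, hbU, hby⟩ := y.2.2
  simp only [LinearMap.mulLeft_apply] at hax hby
  have ha0 : a ≠ 0 := by rintro rfl; simp at hax; exact hxF0 hax.symm
  have hb0 : b ≠ 0 := by rintro rfl; simp at hby; exact hyF0 hby.symm
  have hnscF : ∀ c : K, c • (y : F) ≠ (x : F) := by
    intro c hc
    exact hnsc c (Subtype.ext (by rw [Submodule.coe_smul]; exact hc))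
  have hspanxy : Submodule.span K {(x : F)} ≠ Submodule.span K {(y : F)} := by
    intro h
    have : (x : F) ∈ Submodule.span K {(y : F)} :=
      h ▸ Submodule.mem_span_singleton_self (x : F)
    obtain ⟨c, hc⟩ := Submodule.mem_span_singleton.mp this
    exact hnscF c hc
  have hspanab : Submodule.span K {a} ≠ Submodule.span K {b} := by
    intro h
    have : a ∈ Submodule.span K {b} := h ▸ Submodule.mem_span_singleton_self a
    obtain ⟨c, hc⟩ := Submodule.mem_span_singleton.mp this
    apply hnscF c
    rw [← hax, ← hby, ← hc, Algebra.smul_def, Algebra.smul_def]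
    ring
  have hquoteq : Submodule.span K {(x : F) / (y : F)} = Submodule.span K {a / b} := by
    have : (x : F) / (y : F) = a / b := by
      rw [← hax, ← hby]
      field_simp
    rw [this]
  obtain ⟨hsp1, _⟩ := hquot (x : F) hxU (y : F) hyU a haU b hbU hxF0 hyF0 ha0 hb0
    hspanxy hspanab hquoteq
  have : a ∈ Submodule.span K {(x : F)} := hsp1 ▸ Submodule.mem_span_singleton_self a
  obtain ⟨c, hc⟩ := Submodule.mem_span_singleton.mp this
  have hc0 : c ≠ 0 := by rintro rfl; simp at hc; exact ha0 hc.symm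
  have hgc : (g : F) = algebraMap K F c⁻¹ := by
    have h1 : (g : F) * (algebraMap K F c * (x : F)) = (x : F) := by
      rw [← Algebra.smul_def, hc, hax]
    have h2 : (g : F) * algebraMap K F c = 1 :=
      mul_right_cancel₀ hxF0 (by rw [one_mul, mul_assoc]; exact h1)
    rw [map_inv₀]
    exact eq_inv_of_mul_eq_one_left h2
  apply hg
  ext u
  simp only [Submodule.mem_map, LinearMap.mulLeft_apply]
  constructor
  · rintro ⟨w, hw, rfl⟩
    rw [hgc, ← Algebra.smul_def]
    exact U.smul_mem _ hw
  · intro hu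
    refine ⟨c • u, U.smul_mem c hu, ?_⟩
    rw [hgc, Algebra.smul_def, ← mul_assoc, ← map_mul, inv_mul_cancel₀ hc0, map_one, one_mul]
end

section
/- Conversely, let U be a k-dimensional GF(q)-subspace of GF(q^v) such that for every g ∈ GF(q^v)^× with g·U ≠ U one has dim(U ∩ g·U) ≤ 1. If u₁,u₂,u₃,u₄ are nonzero elements of U with u₁/u₂ = u₃/u₄ and ⟨u₁⟩ ≠ ⟨u₂⟩, then either ⟨u₁⟩ = ⟨u₃⟩ and ⟨u₂⟩ = ⟨u₄⟩, or u₁/u₂ · U = U. -/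
open Module

/-!
Put `g = u₁/u₂ = u₃/u₄`. Both `u₁ = g u₂` and `u₃ = g u₄` lie in `U ∩ g·U`, so if `g·U ≠ U`
this intersection is a line containing the nonzero vectors `u₁` and `u₃`, whence
`⟨u₁⟩ = ⟨u₃⟩`; multiplying by `g⁻¹` then gives `⟨u₂⟩ = ⟨u₄⟩`.
-/

theorem Submodule.span_singleton_eq_of_finrank_le_one {K V : Type*} [DivisionRing K]
    [AddCommGroup V] [Module K V] {W : Submodule K V} [FiniteDimensional K W]
    (hW : finrank K W ≤ 1) {x : V} (hx : x ∈ W) (hx₀ : x ≠ 0) : K ∙ x = W :=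
  Submodule.eq_of_le_of_finrank_le ((Submodule.span_singleton_le_iff_mem x W).mpr hx)
    (hW.trans (finrank_span_singleton hx₀).ge)

section MulLeft

variable {K F : Type*} [Field K] [Field F] [Algebra K F]

theorem Submodule.mem_inf_map_mulLeft_div {U : Submodule K F} {a b : F} (ha : a ∈ U)
    (hb : b ∈ U) (hb₀ : b ≠ 0) : a ∈ U ⊓ U.map (LinearMap.mulLeft K (a / b)) :=
  ⟨ha, b, hb, div_mul_cancel₀ a hb₀⟩

theorem Submodule.span_singleton_mul_eq_map_mulLeft (g x : F) :
    K ∙ (g * x) = (K ∙ x).map (LinearMap.mulLeft K g) := by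
  rw [Submodule.map_span, Set.image_singleton, LinearMap.mulLeft_apply]

end MulLeft

theorem good_orbit_imp_distinct_quotients_general
    (K F : Type*) [Field K] [Field F] [Fintype F] [Algebra K F]
    (U : Submodule K F)
    (hgood : ∀ g : Fˣ, Submodule.map (LinearMap.mulLeft K (g : F)) U ≠ U →
      finrank K ↥(U ⊓ Submodule.map (LinearMap.mulLeft K (g : F)) U) ≤ 1)
    (u₁ u₂ u₃ u₄ : F)
    (h₁ : u₁ ∈ U) (h₂ : u₂ ∈ U) (h₃ : u₃ ∈ U) (h₄ : u₄ ∈ U)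
    (hn₁ : u₁ ≠ 0) (hn₂ : u₂ ≠ 0) (hn₃ : u₃ ≠ 0) (hn₄ : u₄ ≠ 0)
    (heq : u₁ / u₂ = u₃ / u₄) :
    (Submodule.span K {u₁} = Submodule.span K {u₃} ∧
      Submodule.span K {u₂} = Submodule.span K {u₄}) ∨
    Submodule.map (LinearMap.mulLeft K (u₁ / u₂)) U = U := by
  have : FiniteDimensional K F := Module.Finite.of_finite
  by_cases hfix : U.map (LinearMap.mulLeft K (u₁ / u₂)) = U
  · exact Or.inr hfix
  have hline := hgood (Units.mk0 _ (div_ne_zero hn₁ hn₂)) hfix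
  have hu₁ := U.mem_inf_map_mulLeft_div h₁ h₂ hn₂
  have hu₃ := U.mem_inf_map_mulLeft_div h₃ h₄ hn₄
  rw [← heq] at hu₃
  have h₁₃ : K ∙ u₁ = K ∙ u₃ :=
    (Submodule.span_singleton_eq_of_finrank_le_one hline hu₁ hn₁).trans
      (Submodule.span_singleton_eq_of_finrank_le_one hline hu₃ hn₃).symm
  refine Or.inl ⟨h₁₃, ?_⟩
  set g := u₁ / u₂ with hg
  have hu₂ : u₂ = g⁻¹ * u₁ := by rw [hg]; field_simp
  have hu₄ : u₄ = g⁻¹ * u₃ := by rw [heq]; field_simp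
  rw [hu₂, hu₄, Submodule.span_singleton_mul_eq_map_mulLeft,
    Submodule.span_singleton_mul_eq_map_mulLeft, h₁₃]

/-- Converse: if `U` intersects every translate `g·U ≠ U` in dimension at most `1`,
then an equality of quotients `u₁/u₂ = u₃/u₄` with `⟨u₁⟩ ≠ ⟨u₂⟩` forces either
`⟨u₁⟩ = ⟨u₃⟩` and `⟨u₂⟩ = ⟨u₄⟩`, or `(u₁/u₂)·U = U`. -/
theorem good_orbit_imp_distinct_quotients
    (q v k : ℕ) (hv : 1 ≤ v) (hk : 2 ≤ k)
    (K F : Type*) [Field K] [Fintype K] [Field F] [Fintype F] [Algebra K F]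
    (hq : Fintype.card K = q) (hdim : finrank K F = v)
    (U : Submodule K F) (hU : finrank K ↥U = k)
    (hgood : ∀ g : Fˣ, Submodule.map (LinearMap.mulLeft K (g : F)) U ≠ U →
      finrank K ↥(U ⊓ Submodule.map (LinearMap.mulLeft K (g : F)) U) ≤ 1)
    (u₁ u₂ u₃ u₄ : F)
    (h₁ : u₁ ∈ U) (h₂ : u₂ ∈ U) (h₃ : u₃ ∈ U) (h₄ : u₄ ∈ U)
    (hn₁ : u₁ ≠ 0) (hn₂ : u₂ ≠ 0) (hn₃ : u₃ ≠ 0) (hn₄ : u₄ ≠ 0)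
    (heq : u₁ / u₂ = u₃ / u₄)
    (hne : Submodule.span K {u₁} ≠ Submodule.span K {u₂}) :
    (Submodule.span K {u₁} = Submodule.span K {u₃} ∧
      Submodule.span K {u₂} = Submodule.span K {u₄}) ∨
    Submodule.map (LinearMap.mulLeft K (u₁ / u₂)) U = U :=
  good_orbit_imp_distinct_quotients_general K F U hgood u₁ u₂ u₃ u₄ h₁ h₂ h₃ h₄ hn₁ hn₂ hn₃ hn₄ heq
end

section
/- Let U be a 3-dimensional GF(2)-subspace of GF(2^v) such that dim(U ∩ g·U) ≤ 1 for all g ∈ GF(2^v)^× with g·U ≠ U (a good orbit generator). Suppose r, s are two distinct nonzero elements of a codeword W = g·U for some g. Then W is the unique element of the orbit {h·U : h ∈ GF(2^v)^×} containing both r and s, provided the quotients of distinct nonzero elements of U are pairwise distinct. -/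
/-!
Over `GF(2)` a subspace of dimension at most one has at most two elements, so a subspace
containing two distinct nonzero vectors has dimension at least two. If `r ≠ s` are nonzero and
lie in both `g • U` and `h • U`, then `g⁻¹ • r` and `g⁻¹ • s` lie in `U ⊓ (g⁻¹ * h) • U`, so the
goodness of `U` forces `(g⁻¹ * h) • U = U`, that is `g • U = h • U`.
-/

open Module
open scoped Pointwise

section

variable {K V : Type*} [Field K] [Finite K] [AddCommGroup V] [Module K V] [Module.Finite K V]

theorem Module.natCard_le_of_finrank_le_one (h : finrank K V ≤ 1) : Nat.card V ≤ Nat.card K := by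
  rw [Module.natCard_eq_pow_finrank (K := K)]
  exact (Nat.pow_le_pow_right Nat.card_pos h).trans_eq (pow_one _)

theorem Submodule.two_le_finrank_of_mem (hq : Nat.card K = 2) {S : Submodule K V} {x y : V}
    (hx : x ∈ S) (hy : y ∈ S) (hx0 : x ≠ 0) (hy0 : y ≠ 0) (hxy : x ≠ y) :
    2 ≤ finrank K S := by
  by_contra! hlt
  have hle := Module.natCard_le_of_finrank_le_one (K := K) (V := S) (by omega)
  have : Finite S := Module.finite_of_finite K
  have := Fintype.ofFinite S
  have hcard : 2 < Fintype.card S := Fintype.two_lt_card_iff.mpr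
    ⟨0, ⟨x, hx⟩, ⟨y, hy⟩, Subtype.coe_ne_coe.mp hx0.symm, Subtype.coe_ne_coe.mp hy0.symm,
      Subtype.coe_ne_coe.mp hxy⟩
  rw [Nat.card_eq_fintype_card] at hle
  omega

variable {G : Type*} [Group G] [DistribMulAction G V] [SMulCommClass G K V]

theorem Submodule.smul_eq_self_of_mem_inf (hq : Nat.card K = 2) {U : Submodule K V}
    (hgood : ∀ g : G, g • U ≠ U → finrank K ↥(U ⊓ g • U) ≤ 1) {u : G} {x y : V}
    (hx : x ∈ U ⊓ u • U) (hy : y ∈ U ⊓ u • U) (hx0 : x ≠ 0) (hy0 : y ≠ 0) (hxy : x ≠ y) :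
    u • U = U := by
  by_contra hne
  have := Submodule.two_le_finrank_of_mem hq hx hy hx0 hy0 hxy
  have := hgood u hne
  omega

theorem Submodule.smul_eq_smul_of_mem (hq : Nat.card K = 2) {U : Submodule K V}
    (hgood : ∀ g : G, g • U ≠ U → finrank K ↥(U ⊓ g • U) ≤ 1) {g h : G} {r s : V}
    (hr0 : r ≠ 0) (hs0 : s ≠ 0) (hrs : r ≠ s)
    (hrg : r ∈ g • U) (hsg : s ∈ g • U) (hrh : r ∈ h • U) (hsh : s ∈ h • U) :
    g • U = h • U := by
  have mem_inf : ∀ {t : V}, t ∈ g • U → t ∈ h • U → g⁻¹ • t ∈ U ⊓ (g⁻¹ * h) • U := by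
    intro t htg hth
    rw [← smul_smul]
    exact ⟨Set.mem_smul_set_iff_inv_smul_mem.mp htg, Submodule.smul_mem_pointwise_smul _ _ _ hth⟩
  have hfix := Submodule.smul_eq_self_of_mem_inf hq hgood (mem_inf hrg hrh) (mem_inf hsg hsh)
    ((smul_ne_zero_iff_ne _).mpr hr0) ((smul_ne_zero_iff_ne _).mpr hs0)
    ((MulAction.injective g⁻¹).ne hrs)
  calc g • U = g • (g⁻¹ * h) • U := by rw [hfix]
    _ = h • U := by rw [smul_smul, mul_inv_cancel_left]

end

theorem Submodule.map_mulLeft_eq_smul {K F : Type*} [Field K] [Field F] [Algebra K F] (g : Fˣ)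
    (U : Submodule K F) : U.map (LinearMap.mulLeft K (g : F)) = g • U :=
  rfl

theorem good_orbit_erasure_decoding_general
    (K F : Type*) [Field K] [Fintype K] [Field F] [Fintype F] [Algebra K F]
    (hq : Fintype.card K = 2)
    (U : Submodule K F)
    (hgood : ∀ g : Fˣ, Submodule.map (LinearMap.mulLeft K (g : F)) U ≠ U →
      finrank K ↥(U ⊓ Submodule.map (LinearMap.mulLeft K (g : F)) U) ≤ 1)
    (g : Fˣ) (W : Submodule K F)
    (hW : W = Submodule.map (LinearMap.mulLeft K (g : F)) U)
    (r s : F) (hr : r ∈ W) (hs : s ∈ W)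
    (hr0 : r ≠ 0) (hs0 : s ≠ 0) (hrs : r ≠ s) :
    ∃! W' : Submodule K F,
      (∃ h : Fˣ, W' = Submodule.map (LinearMap.mulLeft K (h : F)) U) ∧
      r ∈ W' ∧ s ∈ W' := by
  rw [← Nat.card_eq_fintype_card] at hq
  simp only [Submodule.map_mulLeft_eq_smul] at hgood hW ⊢
  subst hW
  refine ⟨g • U, ⟨⟨g, rfl⟩, hr, hs⟩, ?_⟩
  rintro _ ⟨⟨h, rfl⟩, hrh, hsh⟩
  exact (Submodule.smul_eq_smul_of_mem hq hgood hr0 hs0 hrs hr hs hrh hsh).symm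

/-- Erasure decoding for a good Singer orbit: a 3-dimensional subspace `U` of
`GF(2^v)` with pairwise distinct quotients and small intersections with its
translates. Given two distinct nonzero elements `r, s` of a codeword `W = g·U`,
`W` is the unique element of the orbit containing both `r` and `s`. -/
theorem good_orbit_erasure_decoding
    (v : ℕ) (hv : 3 ≤ v)
    (K F : Type*) [Field K] [Fintype K] [Field F] [Fintype F] [Algebra K F]
    (hq : Fintype.card K = 2) (hdim : finrank K F = v)
    (U : Submodule K F) (hU : finrank K ↥U = 3)
    (hgood : ∀ g : Fˣ, Submodule.map (LinearMap.mulLeft K (g : F)) U ≠ U →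
      finrank K ↥(U ⊓ Submodule.map (LinearMap.mulLeft K (g : F)) U) ≤ 1)
    (hquot : ∀ u₁ ∈ U, ∀ u₂ ∈ U, ∀ u₃ ∈ U, ∀ u₄ ∈ U,
      u₁ ≠ 0 → u₂ ≠ 0 → u₃ ≠ 0 → u₄ ≠ 0 → u₁ ≠ u₂ → u₃ ≠ u₄ →
      u₁ / u₂ = u₃ / u₄ → u₁ = u₃ ∧ u₂ = u₄)
    (g : Fˣ) (W : Submodule K F)
    (hW : W = Submodule.map (LinearMap.mulLeft K (g : F)) U)
    (r s : F) (hr : r ∈ W) (hs : s ∈ W)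
    (hr0 : r ≠ 0) (hs0 : s ≠ 0) (hrs : r ≠ s) :
    ∃! W' : Submodule K F,
      (∃ h : Fˣ, W' = Submodule.map (LinearMap.mulLeft K (h : F)) U) ∧
      r ∈ W' ∧ s ∈ W' :=
  good_orbit_erasure_decoding_general K F hq U hgood g W hW r s hr hs hr0 hs0 hrs
end
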